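/- arXiv:math/0001055 — 7 statements merged into one kernel-verified Lean document; each statement's English description precedes it below -/
import Mathlib

section
/- An element x of a finite lattice L is left-modular if and only if for all y, z ∈ L with z < y, we have x ∧ z ≠ x ∧ y or x ∨ z ≠ x ∨ y. -/
/-- An element `x` of a lattice is left-modular if `(x, y)` is a modular pair for
every `y`, i.e. for all `z < y`, `z ⊔ (x ⊓ y) = (z ⊔ x) ⊓ y`. -/
def LeftModular {L : Type*} [Lattice L] (x : L) : Prop :=
  ∀ z y : L, z < y → z ⊔ (x ⊓ y) = (z ⊔ x) ⊓ y

/-- An element x of a finite lattice L is left-modular if and only if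
for all y, z ∈ L with z < y, we have x ∧ z ≠ x ∧ y or x ∨ z ≠ x ∨ y. -/
theorem leftModular_iff_ne {L : Type*} [Lattice L] [Fintype L] (x : L) :
    LeftModular x ↔ ∀ y z : L, z < y → (x ⊓ z ≠ x ⊓ y ∨ x ⊔ z ≠ x ⊔ y) := by
  constructor
  · intro h y z hzy
    by_contra hc
    push_neg at hc
    obtain ⟨h1, h2⟩ := hc
    have hm := h z y hzy
    have hL : z ⊔ (x ⊓ y) = z := by
      rw [← h1]; exact sup_eq_left.mpr inf_le_right
    have hR : (z ⊔ x) ⊓ y = y := by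
      rw [sup_comm, h2]
      exact inf_eq_right.mpr (le_trans le_sup_right le_rfl)
    rw [hL, hR] at hm; exact hzy.ne hm
  · intro h z y hzy
    set a := z ⊔ (x ⊓ y) with ha
    set b := (z ⊔ x) ⊓ y with hb
    have hab : a ≤ b := sup_le (le_inf le_sup_left hzy.le) (inf_le_inf le_sup_right le_rfl)
    rcases eq_or_lt_of_le hab with heq | hlt
    · exact heq
    · exfalso
      rcases h b a hlt with hne | hne
      · apply hne
        refine le_antisymm (inf_le_inf le_rfl hab) (le_inf inf_le_left ?_)
        calc x ⊓ b ≤ x ⊓ y := inf_le_inf le_rfl inf_le_right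
          _ ≤ a := le_sup_right
      · apply hne
        refine le_antisymm (sup_le_sup le_rfl hab) ?_
        calc x ⊔ b ≤ x ⊔ (z ⊔ x) := sup_le_sup le_rfl inf_le_left
          _ = x ⊔ z := by rw [sup_comm z x, ← sup_assoc, sup_idem]
          _ ≤ x ⊔ a := sup_le_sup le_rfl le_sup_left
end

section
/- An element x of a finite lattice L is left-modular if and only if for every covering pair z ⋖ y in L, exactly one of the equalities x ∧ z = x ∧ y and x ∨ z = x ∨ y holds. -/
/-- An element x of a finite lattice L is left-modular if and only if
for every covering pair z ⋖ y in L, exactly one of the equalities x ∧ z = x ∧ y and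
x ∨ z = x ∨ y holds. -/
theorem leftModular_iff_xor_of_covBy {L : Type*} [Lattice L] [Fintype L] (x : L) :
    LeftModular x ↔ ∀ z y : L, z ⋖ y → Xor' (x ⊓ z = x ⊓ y) (x ⊔ z = x ⊔ y) := by
  have hSA : IsStronglyAtomic L := IsStronglyAtomic.of_wellFounded_lt wellFounded_lt
  constructor
  · intro hlm z y hzy
    have key := hlm z y hzy.lt
    have hne : ¬(x ⊓ z = x ⊓ y ∧ x ⊔ z = x ⊔ y) := by
      rintro ⟨h1, h2⟩
      have e1 : z ⊔ (x ⊓ y) = z := by rw [← h1]; simp [inf_comm]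
      have e2 : (z ⊔ x) ⊓ y = y := by
        rw [sup_comm, h2, sup_comm]
        simp [inf_comm, inf_sup_self]
      rw [e1, e2] at key
      exact hzy.lt.ne key
    have hPQ : x ⊓ z = x ⊓ y ∨ x ⊔ z = x ⊔ y := by
      rcases eq_or_lt_of_le (le_sup_left : z ≤ z ⊔ (x ⊓ y)) with h | h
      · left
        have hxy : x ⊓ y ≤ z := le_sup_right.trans h.symm.le
        exact le_antisymm (inf_le_inf_left x hzy.le) (le_inf inf_le_left hxy)
      · right
        have hm : z ⊔ (x ⊓ y) ≤ y := key.le.trans inf_le_right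
        have : z ⊔ (x ⊓ y) = y := hm.eq_of_not_lt (hzy.2 h)
        have hy : y ≤ z ⊔ x := this ▸ key ▸ inf_le_left
        exact le_antisymm (sup_le_sup_left hzy.le x)
          (sup_le le_sup_left (hy.trans (sup_le le_sup_right le_sup_left)))
    rcases hPQ with h | h
    · exact Or.inl ⟨h, fun h2 => hne ⟨h, h2⟩⟩
    · exact Or.inr ⟨h, fun h1 => hne ⟨h1, h⟩⟩
  · intro hx z y hzy
    by_contra hne
    have hle : z ⊔ (x ⊓ y) ≤ (z ⊔ x) ⊓ y :=
      sup_le (le_inf le_sup_left hzy.le) (le_inf (inf_le_left.trans le_sup_right) inf_le_right)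
    have hlt : z ⊔ (x ⊓ y) < (z ⊔ x) ⊓ y := hle.lt_of_ne hne
    obtain ⟨d, hcd, hdb⟩ := exists_covBy_le_of_lt hlt
    set c := z ⊔ (x ⊓ y) with hc
    have hdy : d ≤ y := hdb.trans inf_le_right
    have h1 : x ⊓ c = x ⊓ d := le_antisymm (inf_le_inf_left x hcd.le)
      (le_inf inf_le_left ((inf_le_inf_left x hdy).trans le_sup_right))
    have h2 : x ⊔ c = x ⊔ d := le_antisymm (sup_le_sup_left hcd.le x)
      (sup_le le_sup_left ((hdb.trans inf_le_left).trans
        (sup_le (le_sup_left.trans le_sup_right) le_sup_left)))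
    rcases hx c d hcd with ⟨_, h⟩ | ⟨_, h⟩ <;> exact h (by assumption)
end

section
/- An element x of a finite lattice L is left-modular if and only if for every interval [a,b] containing x, no two complements of x in the sublattice [a,b] are comparable. -/
/-- An element x of a finite lattice L is left-modular if and only if,
for every interval [a,b] containing x, no two complements of x with respect to the
sublattice [a,b] are comparable.  (Here y ∈ [a,b] is a complement of x in [a,b] if
x ⊓ y = a and x ⊔ y = b.) -/
theorem leftModular_iff_complements_antichain {L : Type*} [Lattice L] [Fintype L] (x : L) :
    LeftModular x ↔
      ∀ a b y z : L, a ≤ x → x ≤ b →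
        a ≤ y → y ≤ b → x ⊓ y = a → x ⊔ y = b →
        a ≤ z → z ≤ b → x ⊓ z = a → x ⊔ z = b →
        y ≤ z → y = z := by
  constructor
  · intro hlm a b y z _ _ _ _ hxy hxyb hza hzb hxz hxzb hyz
    rcases eq_or_lt_of_le hyz with h | h
    · exact h
    · have h2 := hlm y z h
      have ha : y ⊔ a = y := sup_eq_left.mpr (hxy ▸ inf_le_right)
      have hb : b ⊓ z = z := inf_eq_right.mpr hzb
      rw [hxz, sup_comm y x, hxyb, ha, hb] at h2
      exact h2
  · intro h z y hzy
    set u := z ⊔ (x ⊓ y) with hu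
    set v := (z ⊔ x) ⊓ y with hv
    have huv : u ≤ v := sup_le (le_inf (le_sup_left) hzy.le)
      (le_inf (le_trans inf_le_left le_sup_right) inf_le_right)
    have hxu : x ⊓ u = x ⊓ y := le_antisymm
      (le_trans (inf_le_inf_left x huv) (le_inf inf_le_left (le_trans inf_le_right inf_le_right)))
      (le_inf inf_le_left le_sup_right)
    have hxv : x ⊓ v = x ⊓ y := by
      rw [hv, ← inf_assoc]; simp
    have hxu' : x ⊔ u = x ⊔ z := by
      rw [hu, sup_comm z, ← sup_assoc]; simp [sup_comm]
    have hxv' : x ⊔ v = x ⊔ z := le_antisymm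
      (sup_le le_sup_left (le_trans inf_le_left (by rw [sup_comm z x])))
      (by rw [← hxu']; exact sup_le_sup_left huv x)
    exact h (x ⊓ y) (x ⊔ z) u v inf_le_left le_sup_left
      (hxu ▸ inf_le_right) (hxu' ▸ le_sup_right) hxu hxu'
      (hxv ▸ inf_le_right) (hxv' ▸ le_sup_right) hxv hxv' huv
end

section
/- Let τ : L → L' be a surjective join-preserving map between finite lattices, and let σ : L' → L send each x' to the maximal element of τ⁻¹(x'). If σ(⊥') = ⊥, then for every x' ∈ L', μ'(⊥',x') = Σ_{y ∈ τ⁻¹(x')} μ(⊥,y). -/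
open scoped Classical

/-- Let τ : L → L' be a surjective join-preserving map between finite
lattices, and let σ : L' → L send each x' to the maximal element of τ⁻¹(x').
If σ(⊥') = ⊥, then for every x' ∈ L', μ'(⊥',x') = Σ_{y ∈ τ⁻¹(x')} μ(⊥,y).
Here `mu`, `mu'` are the Möbius functions of L, L'. -/
theorem moebius_image_fiber_sum {L L' : Type*} [Lattice L] [Lattice L']
    [Fintype L] [Fintype L'] [OrderBot L] [OrderBot L']
    (mu : L → L → ℤ) (mu' : L' → L' → ℤ)
    (hmu : ∀ a b : L, a ≤ b →
      (∑ c ∈ Finset.univ.filter (fun c => a ≤ c ∧ c ≤ b), mu a c) =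
        if a = b then 1 else 0)
    (hmu' : ∀ a b : L', a ≤ b →
      (∑ c ∈ Finset.univ.filter (fun c => a ≤ c ∧ c ≤ b), mu' a c) =
        if a = b then 1 else 0)
    (τ : L → L') (hτ : ∀ u v : L, τ (u ⊔ v) = τ u ⊔ τ v)
    (hsurj : Function.Surjective τ)
    (σ : L' → L)
    (hσ : ∀ x' : L', τ (σ x') = x' ∧ ∀ y : L, τ y = x' → y ≤ σ x')
    (hσbot : σ ⊥ = ⊥) :
    ∀ x' : L', mu' ⊥ x' = ∑ y ∈ Finset.univ.filter (fun y : L => τ y = x'), mu ⊥ y := by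
  have hmono : ∀ u v : L, u ≤ v → τ u ≤ τ v := by
    intro u v huv
    have h := hτ u v
    rw [sup_eq_right.mpr huv] at h
    rw [h]
    exact le_sup_left
  have hbot : τ (⊥ : L) = ⊥ := by
    have := (hσ ⊥).1
    rwa [hσbot] at this
  have hfib : ∀ (x' : L') (y : L), τ y ≤ x' ↔ y ≤ σ x' := by
    intro x' y
    constructor
    · intro h
      have h1 : τ (y ⊔ σ x') = x' := by
        rw [hτ, (hσ x').1, sup_eq_right.mpr h]
      exact le_sup_left.trans ((hσ x').2 _ h1)
    · intro h
      have := hmono y (σ x') h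
      rwa [(hσ x').1] at this
  set F : L' → ℤ := fun x' => ∑ y ∈ Finset.univ.filter (fun y : L => τ y = x'), mu ⊥ y with hF
  have hbotiff : ∀ x' : L', ((⊥ : L) = σ x') ↔ ((⊥ : L') = x') := by
    intro x'
    constructor
    · intro h
      have := (hσ x').1
      rw [← h, hbot] at this
      exact this.symm ▸ rfl
    · intro h
      rw [← h, hσbot]
  have key : ∀ x' : L',
      (∑ z' ∈ Finset.univ.filter (fun z' => z' ≤ x'), F z') =
        if (⊥ : L') = x' then 1 else 0 := by
    intro x'
    have h1 : (∑ z' ∈ Finset.univ.filter (fun z' => z' ≤ x'), F z') =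
        ∑ y ∈ Finset.univ.filter (fun y : L => τ y ∈ Finset.univ.filter (fun z' => z' ≤ x')),
          mu ⊥ y := by
      rw [hF]
      exact Finset.sum_fiberwise_eq_sum_filter _ _ τ _
    rw [h1]
    have h2 : (Finset.univ.filter (fun y : L => τ y ∈ Finset.univ.filter (fun z' => z' ≤ x')))
        = Finset.univ.filter (fun c : L => ⊥ ≤ c ∧ c ≤ σ x') := by
      ext y
      simp [hfib x' y, bot_le]
    rw [h2, hmu ⊥ (σ x') bot_le]
    by_cases h : (⊥ : L') = x' <;> simp [h, hbotiff x']
  intro x'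
  induction x' using WellFoundedLT.induction with
  | _ x' ih =>
    have hsplit : ∀ (g : L' → ℤ),
        (∑ c ∈ Finset.univ.filter (fun c => c ≤ x'), g c) =
          g x' + ∑ c ∈ Finset.univ.filter (fun c => c < x'), g c := by
      intro g
      have hset : Finset.univ.filter (fun c => c ≤ x')
          = insert x' (Finset.univ.filter (fun c : L' => c < x')) := by
        ext c
        simp [le_iff_lt_or_eq, or_comm]
      rw [hset, Finset.sum_insert (by simp)]
    have H1 := hmu' ⊥ x' bot_le
    simp only [bot_le, true_and] at H1
    have H2 := key x'
    rw [hsplit] at H1 H2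
    have H3 : (∑ c ∈ Finset.univ.filter (fun c => c < x'), mu' ⊥ c)
        = ∑ c ∈ Finset.univ.filter (fun c => c < x'), F c := by
      apply Finset.sum_congr rfl
      intro c hc
      simp only [Finset.mem_filter] at hc
      exact ih c hc.2
    show mu' ⊥ x' = F x'
    omega
end

section
/- Let L be a finite semimodular graded lattice with rank function ρ, let x be a modular element, and let z ≤ x and b ∈ L with b ∧ x = ⊥. Then ρ(z ∨ b) = ρ(z) + ρ(b). -/
/-- Let L be a finite semimodular graded lattice with rank function ρ,
let x be a modular element, and let z ≤ x and b ∈ L with b ∧ x = ⊥.  Then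
ρ(z ∨ b) = ρ(z) + ρ(b).  Here semimodularity is expressed by the covering
condition, the grading by ρ⊥ = 0 and ρ increasing by 1 along covers, and
modularity of x by both (x,y) and (y,x) being modular pairs for every y. -/
theorem rank_sup_of_modular {L : Type*} [Lattice L] [Fintype L] [OrderBot L]
    (ρ : L → ℕ) (hbot : ρ ⊥ = 0)
    (hcov : ∀ a b : L, a ⋖ b → ρ b = ρ a + 1)
    (hsemi : ∀ a b : L, a ⊓ b ⋖ a → b ⋖ a ⊔ b)
    (x : L)
    (hmod : ∀ y : L, (∀ z : L, z < y → z ⊔ (x ⊓ y) = (z ⊔ x) ⊓ y) ∧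
                      (∀ z : L, z < x → z ⊔ (y ⊓ x) = (z ⊔ y) ⊓ x))
    (z b : L) (hz : z ≤ x) (hb : b ⊓ x = ⊥) :
    ρ (z ⊔ b) = ρ z + ρ b := by
  -- strong induction on ρ z
  have key : ∀ n : ℕ, ∀ z : L, ρ z ≤ n → z ≤ x → ρ (z ⊔ b) = ρ z + ρ b := by
    intro n
    induction n with
    | zero =>
      intro z hn hzx
      -- we don't know z = ⊥ just from ρ z = 0, so handle via cover argument too;
      -- but if z ≠ ⊥, the cover step gives ρ z ≥ 1, contradiction.
      by_cases hzbot : z = ⊥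
      · simp [hzbot, hbot]
      · obtain ⟨z', hz'le, hz'cov⟩ := exists_le_covBy_of_lt (bot_lt_iff_ne_bot.mpr hzbot)
        have := hcov z' z hz'cov
        omega
    | succ n ih =>
      intro z hn hzx
      by_cases hzbot : z = ⊥
      · simp [hzbot, hbot]
      · obtain ⟨z', hz'le, hz'cov⟩ := exists_le_covBy_of_lt (bot_lt_iff_ne_bot.mpr hzbot)
        have hrz : ρ z = ρ z' + 1 := hcov z' z hz'cov
        have hz'x : z' ≤ x := hz'cov.le.trans hzx
        have hz'ltx : z' < x := lt_of_lt_of_le hz'cov.lt hzx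
        have hIH : ρ (z' ⊔ b) = ρ z' + ρ b := ih z' (by omega) hz'x
        -- modular pair: z' ⊔ (b ⊓ x) = (z' ⊔ b) ⊓ x
        have hmp : z' = (z' ⊔ b) ⊓ x := by
          have := (hmod b).2 z' hz'ltx
          rwa [hb, sup_bot_eq] at this
        -- z ⊓ (z' ⊔ b) = z'
        have hinf : z ⊓ (z' ⊔ b) = z' := by
          have : z ⊓ (z' ⊔ b) = z ⊓ (x ⊓ (z' ⊔ b)) := by
            rw [← inf_assoc, inf_eq_left.mpr hzx]
          rw [this, inf_comm x, ← hmp, inf_eq_right.mpr hz'cov.le]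
        have hcov2 : (z' ⊔ b) ⋖ z ⊔ (z' ⊔ b) := by
          apply hsemi
          rw [hinf]; exact hz'cov
        have hsupeq : z ⊔ (z' ⊔ b) = z ⊔ b := by
          rw [← sup_assoc, sup_eq_left.mpr hz'cov.le]
        rw [hsupeq] at hcov2
        rw [hcov z' z hz'cov, hcov _ _ hcov2, hIH]
        omega
  exact key (ρ z) z le_rfl hz
end

section
/- Let n ≥ 2 and let π be the non-crossing partition of [n] whose only non-singleton block is {1,2,…,n−1}. Then π is a left-modular element of the lattice NC_n of non-crossing partitions of [n]. -/
/-- A partition (equivalence relation) of `Fin n` is non-crossing if there are no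
`i < j < k < l` with `i ∼ k`, `j ∼ l` but `i ≁ j`. -/
def Noncrossing {n : ℕ} (s : Setoid (Fin n)) : Prop :=
  ¬ ∃ i j k l : Fin n, i < j ∧ j < k ∧ k < l ∧ s.r i k ∧ s.r j l ∧ ¬ s.r i j

/-- The lattice `NC n` of non-crossing partitions of `{1,…,n}` (modelled on `Fin n`),
ordered by refinement (the order inherited from the lattice of all partitions). -/
def NC (n : ℕ) := {s : Setoid (Fin n) // Noncrossing s}

instance (n : ℕ) : PartialOrder (NC n) :=
  inferInstanceAs (PartialOrder {s : Setoid (Fin n) // Noncrossing s})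

/-- The partition of `{1,…,n}` whose only non-singleton block is `{1,…,n−1}`
(in `Fin n`: the block of all elements with value `< n - 1`). -/
def ncPiRel (n : ℕ) : Setoid (Fin n) :=
  ⟨fun i j => (i : ℕ) = j ∨ ((i : ℕ) < n - 1 ∧ (j : ℕ) < n - 1),
   ⟨fun i => Or.inl rfl, fun h => by omega, fun h1 h2 => by omega⟩⟩

theorem ncPiRel_noncrossing (n : ℕ) : Noncrossing (ncPiRel n) := by
  rintro ⟨i, j, k, l, hij, hjk, hkl, hik, hjl, hnij⟩
  simp only [Fin.lt_def] at hij hjk hkl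
  have hik' : (i : ℕ) = k ∨ ((i : ℕ) < n - 1 ∧ (k : ℕ) < n - 1) := hik
  have hjl' : (j : ℕ) = l ∨ ((j : ℕ) < n - 1 ∧ (l : ℕ) < n - 1) := hjl
  have hnij' : ¬ ((i : ℕ) = j ∨ ((i : ℕ) < n - 1 ∧ (j : ℕ) < n - 1)) := hnij
  omega

/-- `π = 12⋯(n−1)` as an element of `NC n`. -/
def ncPi (n : ℕ) : NC n := ⟨ncPiRel n, ncPiRel_noncrossing n⟩

/-! The inequality `z ∨ (π ∧ y) ≤ (z ∨ π) ∧ y` holds for `z ≤ y` in every lattice,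
and for `z ≤ π` the two sides agree trivially. Otherwise `z` joins the last point to the block
`{1,…,n−1}` of `π`, so every point is `z`-equivalent to a point of that block. Meets in `NC n`
are intersections of partitions, and `π ∧ y` is `y` restricted to the block, so any `y`-relation
can be transported along `z` into the block and back, giving `y ≤ z ∨ (π ∧ y)`. -/

theorem sup_inf_eq_inf_sup_of_le {α : Type*} [Lattice α] {x y z : α} (hzy : z ≤ y)
    (h : z ≤ x ∨ y ≤ z ⊔ x ⊓ y) : z ⊔ x ⊓ y = (z ⊔ x) ⊓ y := by
  refine le_antisymm (sup_le (le_inf le_sup_left hzy) (inf_le_inf_right y le_sup_right)) ?_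
  rcases h with hzx | hy
  · rw [sup_eq_right.2 hzx]
    exact le_sup_right
  · exact inf_le_right.trans hy

theorem Noncrossing.inf {n : ℕ} {s t : Setoid (Fin n)} (hs : Noncrossing s)
    (ht : Noncrossing t) : Noncrossing (s ⊓ t) := by
  rintro ⟨i, j, k, l, hij, hjk, hkl, hik, hjl, hnij⟩
  replace hik : s i k ∧ t i k := hik
  replace hjl : s j l ∧ t j l := hjl
  replace hnij : ¬ (s i j ∧ t i j) := hnij
  by_cases hsij : s i j
  · exact ht ⟨i, j, k, l, hij, hjk, hkl, hik.2, hjl.2, fun htij => hnij ⟨hsij, htij⟩⟩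
  · exact hs ⟨i, j, k, l, hij, hjk, hkl, hik.1, hjl.1, hsij⟩

namespace NC

variable {n : ℕ}

def meet (a b : NC n) : NC n := ⟨a.1 ⊓ b.1, a.2.inf b.2⟩

theorem isGLB_meet (a b : NC n) : IsGLB {a, b} (meet a b) := by
  refine ⟨?_, fun c hc => le_inf (α := Setoid (Fin n)) (hc (.inl rfl)) (hc (.inr rfl))⟩
  rintro _ (rfl | rfl)
  exacts [inf_le_left (α := Setoid (Fin n)), inf_le_right (α := Setoid (Fin n))]

theorem exists_rel_lt_of_not_le_ncPi {z : NC n} (hz : ¬ z ≤ ncPi n) (x : Fin n) :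
    ∃ x' : Fin n, (x' : ℕ) < n - 1 ∧ z.1 x x' := by
  obtain ⟨u, v, huv, hnuv⟩ : ∃ u v : Fin n, z.1 u v ∧ ¬ ncPiRel n u v := by
    have hz' : ¬ z.1 ≤ ncPiRel n := hz
    simpa only [Setoid.le_def, not_forall, exists_prop] using hz'
  have hnuv' : ¬ ((u : ℕ) = v ∨ ((u : ℕ) < n - 1 ∧ (v : ℕ) < n - 1)) := hnuv
  by_cases hx : (x : ℕ) < n - 1
  · exact ⟨x, hx, z.1.refl x⟩
  by_cases hu : (u : ℕ) < n - 1
  · obtain rfl : x = v := Fin.ext (by omega)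
    exact ⟨u, hu, z.1.symm huv⟩
  · obtain rfl : x = u := Fin.ext (by omega)
    exact ⟨v, by omega, huv⟩

theorem le_of_meet_ncPi_le {z y w : NC n} (hz : ¬ z ≤ ncPi n) (hzy : z ≤ y) (hzw : z ≤ w)
    (hmeet : meet (ncPi n) y ≤ w) : y ≤ w := by
  intro i j hij
  obtain ⟨i', hi', hii'⟩ := exists_rel_lt_of_not_le_ncPi hz i
  obtain ⟨j', hj', hjj'⟩ := exists_rel_lt_of_not_le_ncPi hz j
  have hyi'j' : y.1 i' j' := y.1.trans (y.1.symm (hzy hii')) (y.1.trans hij (hzy hjj'))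
  have hwi'j' : w.1 i' j' := hmeet (Setoid.inf_iff_and.2 ⟨Or.inr ⟨hi', hj'⟩, hyi'j'⟩)
  exact w.1.trans (hzw hii') (w.1.trans hwi'j' (w.1.symm (hzw hjj')))

end NC

theorem ncPi_leftModular_general (n : ℕ)
    (inf sup : NC n → NC n → NC n)
    (hinf : ∀ a b : NC n, IsGLB {a, b} (inf a b))
    (hsup : ∀ a b : NC n, IsLUB {a, b} (sup a b)) :
    ∀ z y : NC n, z < y → sup z (inf (ncPi n) y) = inf (sup z (ncPi n)) y := by
  intro z y hzy
  let _ : Lattice (NC n) := Lattice.ofIsLUBofIsGLB sup inf hsup hinf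
  have hmeet : (ncPi n) ⊓ y = NC.meet (ncPi n) y := (hinf _ _).unique (NC.isGLB_meet _ _)
  refine sup_inf_eq_inf_sup_of_le hzy.le (or_iff_not_imp_left.2 fun hz => ?_)
  exact NC.le_of_meet_ncPi_le hz hzy.le le_sup_left (hmeet ▸ le_sup_right)

/-- For n ≥ 2, the non-crossing partition π whose only non-singleton
block is {1,2,…,n−1} is a left-modular element of the lattice NC_n: for any lattice
meet `inf` and join `sup` on NC_n (i.e. binary GLBs and LUBs for the refinement
order) and any z < y in NC_n, z ∨ (π ∧ y) = (z ∨ π) ∧ y. -/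
theorem ncPi_leftModular (n : ℕ) (hn : 2 ≤ n)
    (inf sup : NC n → NC n → NC n)
    (hinf : ∀ a b : NC n, IsGLB {a, b} (inf a b))
    (hsup : ∀ a b : NC n, IsLUB {a, b} (sup a b)) :
    ∀ z y : NC n, z < y → sup z (inf (ncPi n) y) = inf (sup z (ncPi n)) y :=
  ncPi_leftModular_general n inf sup hinf hsup
end

section
/- The characteristic polynomial of the poset of shuffles is χ(W_{m,n},t) = (t−1)^m · Σ_{i=0}^{n} (−1)^i · binom(n,i) · binom(m+i,i) · t^{n−i}. -/
/-- Greene's poset of shuffles `W_{m,n}`: fixing the disjoint words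
`x = x₁…x_m` (the letters `Sum.inl i`) and `y = y₁…y_n` (the letters `Sum.inr j`),
an element is a shuffle of a subword of `x` with a subword of `y`, i.e. a duplicate-free
list of letters whose `x`-letters appear in increasing order and whose `y`-letters
appear in increasing order. -/
def ShuffleWord (m n : ℕ) :=
  {w : List (Fin m ⊕ Fin n) //
    w.Nodup ∧ (w.filterMap Sum.getLeft?).Pairwise (· < ·) ∧
      (w.filterMap Sum.getRight?).Pairwise (· < ·)}

/-- The order on `W_{m,n}`: `v ≤ w` iff `v_x ⊇ w_x` and `v_y ⊆ w_y` as sets, and the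
restriction of `v` to the letters of `w` equals the restriction of `w` to the letters
of `v` as words. -/
def ShuffleLE {m n : ℕ} (v w : ShuffleWord m n) : Prop :=
  (∀ a : Fin m, Sum.inl a ∈ w.1 → Sum.inl a ∈ v.1) ∧
  (∀ b : Fin n, Sum.inr b ∈ v.1 → Sum.inr b ∈ w.1) ∧
  v.1.filter (fun c => @decide (c ∈ w.1) (Classical.propDecidable _)) =
    w.1.filter (fun c => @decide (c ∈ v.1) (Classical.propDecidable _))

/-- The rank function `ρ(w) = (m − |w_x|) + |w_y|` of `W_{m,n}`. -/
def shuffleRank {m n : ℕ} (w : ShuffleWord m n) : ℕ :=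
  (m - (w.1.filterMap Sum.getLeft?).length) + (w.1.filterMap Sum.getRight?).length

/-!
Call a shuffle *full* if it contains every letter of `x`. Deleting x-letters from a full shuffle
`u` gives a bijection `S ↦ u|_S` from the subsets `S ⊆ x` onto the shuffles `w ≥ u` with
`w_y = u_y`, and `ρ(u|_S) = |x \ S| + |u_y|`. Greene's formula
`μ(⊥, w) = (-1)^ρ(w) · #{u full : u ≤ w, u_y = w_y}` satisfies the defining recursion of `μ`:
summed over `c ≤ w` it becomes a sum over pairs `(u, S)`, in which the alternating sum over
`S ⊇ w_x` vanishes unless `w` is full, and then the sum over the full `u ≤ w` is the alternating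
sum over the subsets of `w_y`. The same pairs turn `χ` into
`(t - 1)^m · Σ_{u full} (-1)^{|u_y|} t^{n - |u_y|}`, and the full shuffles with `u_y = B` are the
`binom(m + |B|, |B|)` shuffles of `x` with `B`.
-/

namespace List

open Finset

variable {α β : Type*}

@[simp] lemma mem_filterMap_getLeft? {w : List (α ⊕ β)} {a : α} :
    a ∈ w.filterMap Sum.getLeft? ↔ Sum.inl a ∈ w := by
  simp [mem_filterMap, Sum.getLeft?_eq_some_iff]

@[simp] lemma mem_filterMap_getRight? {w : List (α ⊕ β)} {b : β} :
    b ∈ w.filterMap Sum.getRight? ↔ Sum.inr b ∈ w := by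
  simp [mem_filterMap, Sum.getRight?_eq_some_iff]

lemma Nodup.of_filterMap_getLeft?_of_filterMap_getRight? {w : List (α ⊕ β)}
    (hl : (w.filterMap Sum.getLeft?).Nodup) (hr : (w.filterMap Sum.getRight?).Nodup) :
    w.Nodup := by
  induction w with
  | nil => exact nodup_nil
  | cons c t ih =>
    cases c with
    | inl a =>
      simp only [filterMap_cons, Sum.getLeft?_inl, Sum.getRight?_inl, nodup_cons,
        mem_filterMap_getLeft?] at hl hr
      exact nodup_cons.2 ⟨hl.1, ih hl.2 hr⟩
    | inr b =>
      simp only [filterMap_cons, Sum.getLeft?_inr, Sum.getRight?_inr, nodup_cons,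
        mem_filterMap_getRight?] at hl hr
      exact nodup_cons.2 ⟨hr.1, ih hl hr.2⟩

lemma eq_map_inr_of_filterMap_getLeft?_eq_nil {w : List (α ⊕ β)}
    (h : w.filterMap Sum.getLeft? = []) : w = (w.filterMap Sum.getRight?).map Sum.inr := by
  induction w with
  | nil => rfl
  | cons c t ih =>
    cases c with
    | inl a => simp at h
    | inr b => simpa using ih (by simpa using h)

lemma eq_map_inl_of_filterMap_getRight?_eq_nil {w : List (α ⊕ β)}
    (h : w.filterMap Sum.getRight? = []) : w = (w.filterMap Sum.getLeft?).map Sum.inl := by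
  induction w with
  | nil => rfl
  | cons c t ih =>
    cases c with
    | inl a => simpa using ih (by simpa using h)
    | inr b => simp at h

variable [DecidableEq α] [DecidableEq β]

def shuffles : List α → List β → Finset (List (α ⊕ β))
  | [], ys => {ys.map Sum.inr}
  | xs, [] => {xs.map Sum.inl}
  | a :: xs, b :: ys =>
    (shuffles xs (b :: ys)).image (Sum.inl a :: ·) ∪
      (shuffles (a :: xs) ys).image (Sum.inr b :: ·)
termination_by xs ys => xs.length + ys.length

lemma mem_shuffles {xs : List α} {ys : List β} {w : List (α ⊕ β)} :
    w ∈ shuffles xs ys ↔ w.filterMap Sum.getLeft? = xs ∧ w.filterMap Sum.getRight? = ys := by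
  fun_induction shuffles xs ys generalizing w with
  | case1 ys =>
    rw [Finset.mem_singleton]
    refine ⟨?_, fun ⟨hl, hr⟩ => hr ▸ eq_map_inr_of_filterMap_getLeft?_eq_nil hl⟩
    rintro rfl
    simp [filterMap_map, Function.comp_def]
  | case2 xs =>
    rw [Finset.mem_singleton]
    refine ⟨?_, fun ⟨hl, hr⟩ => hl ▸ eq_map_inl_of_filterMap_getRight?_eq_nil hr⟩
    rintro rfl
    simp [filterMap_map, Function.comp_def]
  | case3 a xs b ys ih₁ ih₂ =>
    cases w with
    | nil => simp
    | cons c t => cases c <;> simp [ih₁, ih₂] <;> grind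

lemma card_shuffles (xs : List α) (ys : List β) :
    #(shuffles xs ys) = (xs.length + ys.length).choose ys.length := by
  fun_induction shuffles xs ys with
  | case1 ys => simp
  | case2 xs => simp
  | case3 a xs b ys ih₁ ih₂ =>
    rw [card_union_of_disjoint (by simp [Finset.disjoint_left]),
      card_image_of_injective _ cons_injective, card_image_of_injective _ cons_injective,
      ih₁, ih₂]
    simp only [length_cons]
    grind [Nat.choose_succ_succ']

lemma filter_filter_of_imp {α : Type*} {l : List α} {p q : α → Bool}
    (h : ∀ c ∈ l, q c → p c) : (l.filter p).filter q = l.filter q := by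
  rw [filter_filter]
  exact filter_congr fun c hc => by cases hq : q c <;> simp [hq, h c hc]

end List

namespace Finset

lemma sum_supersets_neg_one_pow_card_compl {α : Type*} [Fintype α] [DecidableEq α]
    (A : Finset α) : ∑ S with A ⊆ S, (-1 : ℤ) ^ #Sᶜ = if A = univ then 1 else 0 := by
  have h : ∑ S with A ⊆ S, (-1 : ℤ) ^ #Sᶜ = ∑ T ∈ Aᶜ.powerset, (-1 : ℤ) ^ #T :=
    sum_nbij' compl compl (by simp) (by simp [subset_compl_comm]) (by simp) (by simp) (by simp)
  simp only [h, sum_powerset_neg_one_pow_card, compl_eq_empty_iff]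

lemma eq_of_forall_sum_filter_rel_eq {ι M : Type*} [Fintype ι] [AddCommGroup M]
    (r : ι → ι → Prop) [DecidableRel r] (rank : ι → ℕ) (hr : ∀ i, r i i)
    (hrank : ∀ i j, r i j → i ≠ j → rank i < rank j) {f g : ι → M}
    (h : ∀ j, ∑ i with r i j, f i = ∑ i with r i j, g i) : f = g := by
  classical
  funext j
  induction hj : rank j using Nat.strong_induction_on generalizing j with
  | _ k ih =>
    have hj' : j ∈ ({i | r i j} : Finset ι) := mem_filter.2 ⟨mem_univ j, hr j⟩
    have hlower : ∑ i ∈ ({i | r i j} : Finset ι).erase j, f i =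
        ∑ i ∈ ({i | r i j} : Finset ι).erase j, g i := by
      refine sum_congr rfl fun i hi => ?_
      obtain ⟨hij, hi⟩ := mem_erase.1 hi
      exact ih _ (hj ▸ hrank i j (mem_filter.1 hi).2 hij) i rfl
    have hsum := h j
    rw [← add_sum_erase _ _ hj', ← add_sum_erase _ _ hj', hlower] at hsum
    exact add_right_cancel hsum

lemma sum_neg_one_pow_card_compl_mul_pow {α R : Type*} [Fintype α] [DecidableEq α] [CommRing R]
    (x : R) : ∑ S : Finset α, (-1) ^ #Sᶜ * x ^ #S = (x - 1) ^ Fintype.card α := by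
  rw [sub_eq_add_neg, ← card_univ, ← prod_const, prod_add, powerset_univ]
  simp [prod_const, mul_comm, compl_eq_univ_sdiff]

end Finset

noncomputable section

open Finset
-- `List` membership is decided through `LawfulBEq`, which `Fin m ⊕ Fin n` lacks, so membership
-- in a shuffle is decided classically, as in `ShuffleLE`.
open scoped Classical

namespace ShuffleWord

variable {m n : ℕ}

def xLetters (w : ShuffleWord m n) : Finset (Fin m) := {a | Sum.inl a ∈ w.1}

def yLetters (w : ShuffleWord m n) : Finset (Fin n) := {b | Sum.inr b ∈ w.1}

@[simp] lemma mem_xLetters {w : ShuffleWord m n} {a : Fin m} :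
    a ∈ xLetters w ↔ Sum.inl a ∈ w.1 := by
  simp [xLetters]

@[simp] lemma mem_yLetters {w : ShuffleWord m n} {b : Fin n} :
    b ∈ yLetters w ↔ Sum.inr b ∈ w.1 := by
  simp [yLetters]

lemma card_xLetters (w : ShuffleWord m n) :
    #(xLetters w) = (w.1.filterMap Sum.getLeft?).length := by
  rw [← List.toFinset_card_of_nodup w.2.2.1.nodup]
  congr 1
  ext a
  simp

lemma card_yLetters (w : ShuffleWord m n) :
    #(yLetters w) = (w.1.filterMap Sum.getRight?).length := by
  rw [← List.toFinset_card_of_nodup w.2.2.2.nodup]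
  congr 1
  ext b
  simp

lemma shuffleRank_eq (w : ShuffleWord m n) :
    shuffleRank w = #(xLetters w)ᶜ + #(yLetters w) := by
  rw [shuffleRank, ← card_xLetters, ← card_yLetters, card_compl, Fintype.card_fin]

lemma mem_iff_of_letters_eq {v w : ShuffleWord m n} (hx : xLetters v = xLetters w)
    (hy : yLetters v = yLetters w) (c : Fin m ⊕ Fin n) : c ∈ v.1 ↔ c ∈ w.1 := by
  cases c with
  | inl a => simpa using congr(a ∈ $hx)
  | inr b => simpa using congr(b ∈ $hy)

lemma shuffleLE_iff {v w : ShuffleWord m n} :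
    ShuffleLE v w ↔ xLetters w ⊆ xLetters v ∧ yLetters v ⊆ yLetters w ∧
      v.1.filter (· ∈ w.1) = w.1.filter (· ∈ v.1) := by
  unfold ShuffleLE
  congr! 2 <;> simp [Finset.subset_iff]

lemma shuffleLE_refl (w : ShuffleWord m n) : ShuffleLE w w :=
  shuffleLE_iff.2 ⟨subset_rfl, subset_rfl, rfl⟩

lemma eq_of_shuffleLE_of_letters_eq {v w : ShuffleWord m n} (h : ShuffleLE v w)
    (hx : xLetters v = xLetters w) (hy : yLetters v = yLetters w) : v = w := by
  have hvw := (shuffleLE_iff.1 h).2.2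
  rw [List.filter_eq_self.2 fun c hc => by simpa [← mem_iff_of_letters_eq hx hy] using hc,
    List.filter_eq_self.2 fun c hc => by simpa [mem_iff_of_letters_eq hx hy] using hc] at hvw
  exact Subtype.ext hvw

lemma shuffleRank_lt_of_shuffleLE {v w : ShuffleWord m n} (h : ShuffleLE v w) (hne : v ≠ w) :
    shuffleRank v < shuffleRank w := by
  obtain ⟨hx, hy, -⟩ := shuffleLE_iff.1 h
  have hx' : (xLetters v)ᶜ ⊆ (xLetters w)ᶜ := compl_subset_compl.2 hx
  have := card_le_card hx'
  have := card_le_card hy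
  rw [shuffleRank_eq, shuffleRank_eq]
  by_contra! hle
  exact hne (eq_of_shuffleLE_of_letters_eq h
    (compl_inj_iff.1 (eq_of_subset_of_card_le hx' (by omega)))
    (eq_of_subset_of_card_le hy (by omega)))

def HasAllX (u : ShuffleWord m n) : Prop := ∀ a : Fin m, Sum.inl a ∈ u.1

def ofSublist (w : ShuffleWord m n) {l : List (Fin m ⊕ Fin n)} (h : l.Sublist w.1) :
    ShuffleWord m n :=
  ⟨l, w.2.1.sublist h, w.2.2.1.sublist (h.filterMap _), w.2.2.2.sublist (h.filterMap _)⟩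

def keepX (S : Finset (Fin m)) : Fin m ⊕ Fin n → Bool := Sum.elim (· ∈ S) fun _ => true

def keepY (T : Finset (Fin n)) : Fin m ⊕ Fin n → Bool := Sum.elim (fun _ => true) (· ∈ T)

def restrictX (u : ShuffleWord m n) (S : Finset (Fin m)) : ShuffleWord m n :=
  u.ofSublist (u.1.filter_sublist (p := keepX S))

def restrictY (w : ShuffleWord m n) (T : Finset (Fin n)) : ShuffleWord m n :=
  w.ofSublist (w.1.filter_sublist (p := keepY T))

lemma coe_restrictX (u : ShuffleWord m n) (S : Finset (Fin m)) :
    (restrictX u S).1 = u.1.filter (keepX S) := rfl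

lemma coe_restrictY (w : ShuffleWord m n) (T : Finset (Fin n)) :
    (restrictY w T).1 = w.1.filter (keepY T) := rfl

@[simp] lemma inl_mem_restrictX {u : ShuffleWord m n} {S : Finset (Fin m)} {a : Fin m} :
    Sum.inl a ∈ (restrictX u S).1 ↔ Sum.inl a ∈ u.1 ∧ a ∈ S := by
  simp [restrictX, ofSublist, keepX]

@[simp] lemma inr_mem_restrictX {u : ShuffleWord m n} {S : Finset (Fin m)} {b : Fin n} :
    Sum.inr b ∈ (restrictX u S).1 ↔ Sum.inr b ∈ u.1 := by
  simp [restrictX, ofSublist, keepX]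

@[simp] lemma inl_mem_restrictY {w : ShuffleWord m n} {T : Finset (Fin n)} {a : Fin m} :
    Sum.inl a ∈ (restrictY w T).1 ↔ Sum.inl a ∈ w.1 := by
  simp [restrictY, ofSublist, keepY]

@[simp] lemma inr_mem_restrictY {w : ShuffleWord m n} {T : Finset (Fin n)} {b : Fin n} :
    Sum.inr b ∈ (restrictY w T).1 ↔ Sum.inr b ∈ w.1 ∧ b ∈ T := by
  simp [restrictY, ofSublist, keepY]

lemma xLetters_restrictX {u : ShuffleWord m n} (hu : HasAllX u) (S : Finset (Fin m)) :
    xLetters (restrictX u S) = S := by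
  ext a; simp [hu a]

lemma yLetters_restrictX (u : ShuffleWord m n) (S : Finset (Fin m)) :
    yLetters (restrictX u S) = yLetters u := by
  ext b; simp

lemma yLetters_restrictY {w : ShuffleWord m n} {T : Finset (Fin n)} (hT : T ⊆ yLetters w) :
    yLetters (restrictY w T) = T := by
  ext b; simpa using fun hb => mem_yLetters.1 (hT hb)

lemma HasAllX.restrictY {w : ShuffleWord m n} (hw : HasAllX w) (T : Finset (Fin n)) :
    HasAllX (restrictY w T) :=
  fun a => inl_mem_restrictY.2 (hw a)

lemma shuffleRank_restrictX {u : ShuffleWord m n} (hu : HasAllX u) (S : Finset (Fin m)) :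
    shuffleRank (restrictX u S) = #Sᶜ + #(yLetters u) := by
  rw [shuffleRank_eq, xLetters_restrictX hu, yLetters_restrictX]

lemma shuffleLE_restrictX (u : ShuffleWord m n) (S : Finset (Fin m)) :
    ShuffleLE u (restrictX u S) := by
  refine shuffleLE_iff.2 ⟨fun a => by simp +contextual, (yLetters_restrictX u S).ge, ?_⟩
  rw [(List.filter_eq_self (l := (restrictX u S).1)).2 fun c hc => by
    simpa using (List.mem_filter.1 hc).1]
  exact List.filter_congr (q := keepX S) fun c hc => by simp [coe_restrictX, hc]

lemma restrictY_shuffleLE (w : ShuffleWord m n) (T : Finset (Fin n)) :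
    ShuffleLE (restrictY w T) w := by
  refine shuffleLE_iff.2 ⟨fun a => by simp, fun b => by simp +contextual, ?_⟩
  rw [(List.filter_eq_self (l := (restrictY w T).1)).2 fun c hc => by
    simpa using (List.mem_filter.1 hc).1]
  exact (List.filter_congr (q := keepY T) fun c hc => by simp [coe_restrictY, hc]).symm

lemma restrictX_shuffleLE_iff {u w : ShuffleWord m n} (hu : HasAllX u) {S : Finset (Fin m)} :
    ShuffleLE (restrictX u S) w ↔ ShuffleLE u w ∧ xLetters w ⊆ S := by
  have hx : xLetters w ⊆ xLetters u := fun a _ => mem_xLetters.2 (hu a)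
  suffices h : xLetters w ⊆ S →
      ((restrictX u S).1.filter (· ∈ w.1) = w.1.filter (· ∈ (restrictX u S).1) ↔
        u.1.filter (· ∈ w.1) = w.1.filter (· ∈ u.1)) by
    simp only [shuffleLE_iff, xLetters_restrictX hu, yLetters_restrictX]
    exact ⟨fun h' => ⟨⟨hx, h'.2.1, (h h'.1).1 h'.2.2⟩, h'.1⟩,
      fun h' => ⟨h'.2, h'.1.2.1, (h h'.2).2 h'.1.2.2⟩⟩
  intro hS
  have hp : ∀ c ∈ w.1, keepX S c := by
    rintro (a | b) hc
    · simpa [keepX] using hS (mem_xLetters.2 hc)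
    · rfl
  rw [List.filter_congr (l := w.1) (q := (· ∈ u.1)) fun c hc => by simp [coe_restrictX, hp c hc],
    coe_restrictX, List.filter_filter_of_imp fun c _ hc => hp c (by simpa using hc)]

lemma restrictX_xLetters {u w : ShuffleWord m n} (hu : HasAllX u) (h : ShuffleLE u w)
    (hy : yLetters w = yLetters u) : restrictX u (xLetters w) = w := by
  obtain ⟨-, hyuw, hf⟩ := shuffleLE_iff.1 h
  have hw : w.1.filter (· ∈ u.1) = w.1 := List.filter_eq_self.2 fun c hc => by
    cases c with
    | inl a => simpa using hu a
    | inr b => simpa using mem_yLetters.1 (hy ▸ mem_yLetters.2 hc)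
  refine Subtype.ext ?_
  rw [coe_restrictX, ← hw, ← hf]
  refine List.filter_congr fun c hc => ?_
  cases c with
  | inl a => simp [keepX]
  | inr b => simpa [keepX] using hyuw (mem_yLetters.2 hc)

lemma restrictY_yLetters {u w : ShuffleWord m n} (hu : HasAllX u) (hw : HasAllX w)
    (h : ShuffleLE u w) : restrictY w (yLetters u) = u := by
  obtain ⟨-, hyuw, hf⟩ := shuffleLE_iff.1 h
  have hu' : u.1.filter (· ∈ w.1) = u.1 := List.filter_eq_self.2 fun c hc => by
    cases c with
    | inl a => simpa using hw a
    | inr b => simpa using hyuw (mem_yLetters.2 hc)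
  refine Subtype.ext ?_
  rw [coe_restrictY, ← hu', hf]
  refine List.filter_congr fun c _ => ?_
  cases c with
  | inl a => simpa [keepY] using hu a
  | inr b => simp [keepY]

lemma hasAllX_iff {w : ShuffleWord m n} : HasAllX w ↔ xLetters w = univ := by
  simp [HasAllX, eq_univ_iff_forall]

lemma hasAllX_of_forall_shuffleLE {bot : ShuffleWord m n} (hbot : ∀ w, ShuffleLE bot w) :
    HasAllX bot := fun a =>
  (hbot ⟨[Sum.inl a], by simp [List.filterMap_cons]⟩).1 a (by simp)

lemma yLetters_eq_empty_of_forall_shuffleLE {bot : ShuffleWord m n}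
    (hbot : ∀ w, ShuffleLE bot w) : yLetters bot = ∅ :=
  eq_empty_of_forall_notMem fun b hb => by
    simpa using (hbot ⟨[], by simp⟩).2.1 b (mem_yLetters.1 hb)

lemma eq_bot_iff_hasAllX_yLetters_eq_empty {bot : ShuffleWord m n} (hbot : ∀ w, ShuffleLE bot w)
    {w : ShuffleWord m n} : w = bot ↔ HasAllX w ∧ yLetters w = ∅ := by
  refine ⟨?_, fun ⟨hx, hy⟩ => (eq_of_shuffleLE_of_letters_eq (hbot w) ?_ ?_).symm⟩
  · rintro rfl
    exact ⟨hasAllX_of_forall_shuffleLE hbot, yLetters_eq_empty_of_forall_shuffleLE hbot⟩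
  · rw [hasAllX_iff.1 hx, hasAllX_iff.1 (hasAllX_of_forall_shuffleLE hbot)]
  · rw [hy, yLetters_eq_empty_of_forall_shuffleLE hbot]

variable [Fintype (ShuffleWord m n)] {M : Type*} [AddCommMonoid M]

lemma sum_restrictX {u : ShuffleWord m n} (hu : HasAllX u) (g : ShuffleWord m n → M) :
    ∑ S : Finset (Fin m), g (restrictX u S) =
      ∑ w with ShuffleLE u w ∧ yLetters w = yLetters u, g w := by
  refine sum_nbij' (restrictX u) xLetters ?_ (by simp) (fun S _ => xLetters_restrictX hu S)
    ?_ (by simp)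
  · intro S _
    simpa using ⟨shuffleLE_restrictX u S, yLetters_restrictX u S⟩
  · intro w hw
    simp only [mem_filter, mem_univ, true_and] at hw
    exact restrictX_xLetters hu hw.1 hw.2

lemma sum_hasAllX_shuffleLE {w : ShuffleWord m n} (hw : HasAllX w) (g : Finset (Fin n) → M) :
    ∑ u with HasAllX u ∧ ShuffleLE u w, g (yLetters u) =
      ∑ T ∈ (yLetters w).powerset, g T := by
  refine sum_nbij' yLetters (restrictY w) ?_ ?_ ?_ ?_ (by simp)
  · intro u hu
    simp only [mem_filter, mem_univ, true_and] at hu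
    simpa using (shuffleLE_iff.1 hu.2).2.1
  · intro T _
    simpa using ⟨hw.restrictY T, restrictY_shuffleLE w T⟩
  · intro u hu
    simp only [mem_filter, mem_univ, true_and] at hu
    exact restrictY_yLetters hu.1 hw hu.2
  · intro T hT
    exact yLetters_restrictY (by simpa using hT)

def fullBelow (w : ShuffleWord m n) : Finset (ShuffleWord m n) :=
  {u | HasAllX u ∧ ShuffleLE u w ∧ yLetters u = yLetters w}

lemma sum_card_fullBelow_smul (g : ShuffleWord m n → M) :
    ∑ w, #(fullBelow w) • g w =
      ∑ u with HasAllX u, ∑ S : Finset (Fin m), g (restrictX u S) := by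
  simp_rw [← sum_const]
  rw [sum_comm' (t' := {u | HasAllX u})
    (s' := fun u => {w | ShuffleLE u w ∧ yLetters w = yLetters u})]
  · exact sum_congr rfl fun u hu => (sum_restrictX (mem_filter.1 hu).2 g).symm
  · intro w u
    simp only [fullBelow, mem_filter, mem_univ, true_and]
    tauto

-- Greene's formula for `μ(⊥, w)`.
def mobiusBot (w : ShuffleWord m n) : ℤ := (-1) ^ shuffleRank w * #(fullBelow w)

lemma sum_mobiusBot_shuffleLE (w : ShuffleWord m n) :
    ∑ c with ShuffleLE c w, mobiusBot c = if HasAllX w ∧ yLetters w = ∅ then 1 else 0 := by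
  have hterm (u : ShuffleWord m n) (hu : HasAllX u) :
      ∑ S : Finset (Fin m),
        (if ShuffleLE (restrictX u S) w then (-1 : ℤ) ^ shuffleRank (restrictX u S) else 0) =
      if ShuffleLE u w then (-1) ^ #(yLetters u) * ∑ S with xLetters w ⊆ S, (-1) ^ #Sᶜ
        else 0 := by
    simp only [restrictX_shuffleLE_iff hu, shuffleRank_restrictX hu]
    split_ifs with huw <;> simp [huw, sum_filter, mul_sum, pow_add, mul_comm]
  calc ∑ c with ShuffleLE c w, mobiusBot c
      = ∑ c, #(fullBelow c) • if ShuffleLE c w then (-1 : ℤ) ^ shuffleRank c else 0 := by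
        rw [sum_filter]
        refine sum_congr rfl fun c _ => ?_
        split_ifs <;> simp [mobiusBot, mul_comm]
    _ = ∑ u with HasAllX u, if ShuffleLE u w then
          (-1) ^ #(yLetters u) * ∑ S with xLetters w ⊆ S, (-1) ^ #Sᶜ else 0 := by
        rw [sum_card_fullBelow_smul]
        exact sum_congr rfl fun u hu => hterm u (mem_filter.1 hu).2
    _ = (∑ u with HasAllX u ∧ ShuffleLE u w, (-1) ^ #(yLetters u)) *
          if HasAllX w then 1 else 0 := by
        rw [← filter_filter, sum_mul, sum_filter (s := {u | HasAllX u}),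
          sum_supersets_neg_one_pow_card_compl, hasAllX_iff]
        congr!
    _ = if HasAllX w ∧ yLetters w = ∅ then 1 else 0 := by
        by_cases hw : HasAllX w
        · simp [hw, sum_hasAllX_shuffleLE hw (fun T => (-1 : ℤ) ^ #T),
            sum_powerset_neg_one_pow_card]
        · simp [hw]

lemma mu_bot_eq_mobiusBot (mu : ShuffleWord m n → ShuffleWord m n → ℤ)
    (hmu : ∀ a b : ShuffleWord m n, ShuffleLE a b →
      ∑ c with ShuffleLE a c ∧ ShuffleLE c b, mu a c = if a = b then 1 else 0)
    {bot : ShuffleWord m n} (hbot : ∀ w, ShuffleLE bot w) : mu bot = mobiusBot := by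
  refine eq_of_forall_sum_filter_rel_eq ShuffleLE shuffleRank shuffleLE_refl
    (fun _ _ => shuffleRank_lt_of_shuffleLE) fun w => ?_
  simp only [sum_mobiusBot_shuffleLE, ← eq_bot_iff_hasAllX_yLetters_eq_empty hbot,
    ← hmu bot w (hbot w), eq_comm (a := w), hbot, true_and]

lemma card_hasAllX_yLetters_eq (B : Finset (Fin n)) :
    #{u : ShuffleWord m n | HasAllX u ∧ yLetters u = B} = (m + #B).choose #B := by
  have hB := (B.sortedLT_sort).pairwise
  have hm := (List.sortedLT_finRange m).pairwise
  rw [show (m + #B).choose #B = #(List.shuffles (List.finRange m) (B.sort (· ≤ ·))) by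
    rw [List.card_shuffles, List.length_finRange, B.length_sort]]
  refine card_bij (fun u _ => u.1) (fun u hu => ?_) (fun u _ v _ h => Subtype.ext h) ?_
  · obtain ⟨hx, hy⟩ := (mem_filter.1 hu).2
    refine List.mem_shuffles.2 ⟨u.2.2.1.eq_of_mem_iff hm fun a => by simpa using hx a,
      u.2.2.2.eq_of_mem_iff hB fun b => by simp [← hy]⟩
  · intro w hw
    obtain ⟨hl, hr⟩ := List.mem_shuffles.1 hw
    refine ⟨⟨w, List.Nodup.of_filterMap_getLeft?_of_filterMap_getRight? (hl ▸ hm.nodup)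
      (hr ▸ hB.nodup), hl ▸ hm, hr ▸ hB⟩, ?_, rfl⟩
    refine mem_filter.2 ⟨mem_univ _, fun a => ?_, ?_⟩
    · simpa using congr(a ∈ $hl)
    · ext b
      exact mem_yLetters.trans (by simpa using congr(b ∈ $hr))

lemma sum_hasAllX_card_yLetters {M : Type*} [AddCommMonoid M] (f : ℕ → M) :
    ∑ u : ShuffleWord m n with HasAllX u, f #(yLetters u) =
      ∑ i ∈ range (n + 1), (n.choose i * (m + i).choose i) • f i := by
  rw [← sum_fiberwise_of_maps_to (g := yLetters) (t := univ) fun _ _ => mem_univ _]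
  calc ∑ B : Finset (Fin n), ∑ u ∈ ({u | HasAllX u} : Finset (ShuffleWord m n))
          with yLetters u = B, f #(yLetters u)
      = ∑ B : Finset (Fin n), (m + #B).choose #B • f #B := by
        refine sum_congr rfl fun B _ => ?_
        rw [filter_filter, ← card_hasAllX_yLetters_eq, ← sum_const]
        exact sum_congr rfl fun u hu => by rw [(mem_filter.1 hu).2.2]
    _ = _ := by
        rw [← powerset_univ, sum_powerset_apply_card (fun k => (m + k).choose k • f k),
          card_univ, Fintype.card_fin]
        simp only [mul_smul]

lemma sum_mobiusBot_mul_pow {R : Type*} [CommRing R] (x : R) :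
    ∑ w : ShuffleWord m n, (mobiusBot w : R) * x ^ (m + n - shuffleRank w) =
      (x - 1) ^ m * ∑ i ∈ range (n + 1),
        (-1) ^ i * (n.choose i : R) * ((m + i).choose i : R) * x ^ (n - i) := by
  have hexp (S : Finset (Fin m)) (u : ShuffleWord m n) :
      m + n - (#Sᶜ + #(yLetters u)) = #S + (n - #(yLetters u)) := by
    have := card_add_card_compl S
    have := card_le_univ (yLetters u)
    simp only [Fintype.card_fin] at *
    omega
  calc ∑ w : ShuffleWord m n, (mobiusBot w : R) * x ^ (m + n - shuffleRank w)
      = ∑ w, #(fullBelow w) • ((-1) ^ shuffleRank w * x ^ (m + n - shuffleRank w)) := by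
        refine sum_congr rfl fun w _ => ?_
        simp only [mobiusBot, nsmul_eq_mul]
        push_cast
        ring
    _ = ∑ u with HasAllX u, (∑ S : Finset (Fin m), (-1) ^ #Sᶜ * x ^ #S) *
          ((-1) ^ #(yLetters u) * x ^ (n - #(yLetters u))) := by
        rw [sum_card_fullBelow_smul, sum_congr rfl]
        intro u hu
        rw [sum_mul]
        refine sum_congr rfl fun S _ => ?_
        rw [shuffleRank_restrictX (mem_filter.1 hu).2, hexp S u, pow_add, pow_add]
        ring
    _ = _ := by
        rw [sum_neg_one_pow_card_compl_mul_pow, Fintype.card_fin, ← mul_sum,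
          sum_hasAllX_card_yLetters (fun i => (-1 : R) ^ i * x ^ (n - i))]
        refine congrArg _ (sum_congr rfl fun i _ => ?_)
        simp only [nsmul_eq_mul]
        push_cast
        ring

end ShuffleWord

end

open scoped Classical in
open Polynomial in
/-- The characteristic polynomial
`χ(W_{m,n},t) = Σ_w μ(⊥,w) t^{(m+n)−ρ(w)}` of the shuffle poset is
`(t−1)^m · Σ_{i=0}^{n} (−1)^i binom(n,i) binom(m+i,i) t^{n−i}`.
Here `mu` is the Möbius function of `W_{m,n}` and `bot` its bottom element `x`. -/
theorem shuffleChi (m n : ℕ) [Fintype (ShuffleWord m n)]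
    (mu : ShuffleWord m n → ShuffleWord m n → ℤ)
    (hmu : ∀ a b : ShuffleWord m n, ShuffleLE a b →
      (∑ c ∈ Finset.univ.filter (fun c => ShuffleLE a c ∧ ShuffleLE c b), mu a c) =
        if a = b then 1 else 0)
    (bot : ShuffleWord m n) (hbot : ∀ w : ShuffleWord m n, ShuffleLE bot w) :
    ∑ w : ShuffleWord m n, C (mu bot w) * X ^ ((m + n) - shuffleRank w)
      = (X - 1) ^ m *
        ∑ i ∈ Finset.range (n + 1),
          C ((-1) ^ i * (n.choose i : ℤ) * ((m + i).choose i : ℤ)) * X ^ (n - i) := by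
  rw [ShuffleWord.mu_bot_eq_mobiusBot mu hmu hbot]
  convert ShuffleWord.sum_mobiusBot_mul_pow (m := m) (n := n) (X : ℤ[X]) using 3 <;> simp
end
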